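/- All coefficients of the bivariate power series C(x,y) = Φ(C(x)) are nonnegative integers. Specifically, writing C(x,y) = Σ_{n,k} u_{n,k} x^n y^k, each u_{n,k} ≥ 0. -/

import Mathlib

open PowerSeries MvPowerSeries Finset

/-- Substitution of a bivariate power series with zero constant term (and positive
order in every monomial) into a univariate formal power series, defined
coefficient-wise. -/
noncomputable def substPS {R : Type*} [CommRing R]
    (a : MvPowerSeries (Fin 2) R) (f : PowerSeries R) : MvPowerSeries (Fin 2) R :=
  fun d => ∑ n ∈ Finset.range (d 0 + d 1 + 1),
    (PowerSeries.coeff n f) * MvPowerSeries.coeff d (a ^ n)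

/-- The run transform `Φ(f)(x,y) = ((1-x)/(1-xy)) · f(x(1-x)/(1-xy))`. -/
noncomputable def runTransform {R : Type*} [CommRing R] (f : PowerSeries R) :
    MvPowerSeries (Fin 2) R :=
  (1 - MvPowerSeries.X 0) * MvPowerSeries.invOfUnit (1 - MvPowerSeries.X 0 * MvPowerSeries.X 1) 1 *
    substPS ((MvPowerSeries.X 0 * (1 - MvPowerSeries.X 0)) *
      MvPowerSeries.invOfUnit (1 - MvPowerSeries.X 0 * MvPowerSeries.X 1) 1) f

/-- The Catalan generating function `C(x) = Σ C_n x^n` (over `ℤ`). -/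
noncomputable def catalanGF : PowerSeries ℤ := PowerSeries.mk fun n => (catalan n : ℤ)

/-! Substituting into `C = 1 + t C²` shows that `F = Φ(C)` solves `F = (1-x)/(1-xy) + x F²`,
i.e. `u_{n,k} = [n = k] - [n = k+1] + Σ u_{a,b} u_{n-1-a,k-b}`. Induction on `n` shows that
`u_{n,k} = 0` for `k > n`, hence `u_{n,n} = 1` (every product in the sum has a factor above the
diagonal). The only negative contribution, `-1` at `k = n-1`, is then cancelled by the term
`u_{0,0} u_{n-1,n-1} = 1`, and all other terms are nonnegative by induction. -/

theorem MvPowerSeries.coeff_pow_eq_zero_of_degree_lt {σ R : Type*} [Semiring R]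
    {a : MvPowerSeries σ R} (ha : MvPowerSeries.constantCoeff a = 0) {d : σ →₀ ℕ} {n : ℕ}
    (h : d.degree < n) : MvPowerSeries.coeff d (a ^ n) = 0 :=
  MvPowerSeries.coeff_of_lt_order <|
    (Nat.cast_lt.mpr h).trans_le (MvPowerSeries.le_order_pow_of_constantCoeff_eq_zero n ha)

theorem MvPowerSeries.coeff_X_mul_of_pos {σ R : Type*} [Semiring R] [DecidableEq σ]
    (φ : MvPowerSeries σ R) {i : σ} {d : σ →₀ ℕ} (hd : 0 < d i) :
    MvPowerSeries.coeff d (MvPowerSeries.X i * φ) =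
      MvPowerSeries.coeff (d - Finsupp.single i 1) φ := by
  rw [MvPowerSeries.X_def, MvPowerSeries.coeff_monomial_mul,
    if_pos (Finsupp.single_le_iff.mpr hd), one_mul]

theorem MvPowerSeries.coeff_X_mul_of_eq_zero {σ R : Type*} [Semiring R]
    (φ : MvPowerSeries σ R) {i : σ} {d : σ →₀ ℕ} (hd : d i = 0) :
    MvPowerSeries.coeff d (MvPowerSeries.X i * φ) = 0 := by
  classical
  rw [MvPowerSeries.X_def, MvPowerSeries.coeff_monomial_mul, if_neg]
  rw [Finsupp.single_le_iff, hd]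
  exact Nat.not_succ_le_zero 0

theorem Finsupp.tsub_single_lt {σ : Type*} {d : σ →₀ ℕ} {i : σ} (hd : 0 < d i) :
    d - Finsupp.single i 1 < d :=
  lt_of_le_of_ne tsub_le_self fun h => by
    have := congr($h i)
    rw [Finsupp.tsub_apply, Finsupp.single_eq_same] at this
    omega

theorem Finsupp.sum_antidiagonal_mul_eq_zero_of_lt {σ M : Type*} [DecidableEq σ]
    [NonUnitalNonAssocSemiring M] (c : (σ →₀ ℕ) → M) {i j : σ} {e : σ →₀ ℕ} (he : e i < e j)
    (hc : ∀ d ≤ e, d i < d j → c d = 0) :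
    ∑ p ∈ antidiagonal e, c p.1 * c p.2 = 0 := by
  refine Finset.sum_eq_zero fun p hp => ?_
  rw [HasAntidiagonal.mem_antidiagonal] at hp
  have hi : p.1 i + p.2 i = e i := by rw [← hp, Finsupp.add_apply]
  have hj : p.1 j + p.2 j = e j := by rw [← hp, Finsupp.add_apply]
  rcases lt_or_ge (p.1 i) (p.1 j) with h | h
  · rw [hc p.1 (hp ▸ le_self_add) h, zero_mul]
  · rw [hc p.2 (hp ▸ le_add_self) (by omega), mul_zero]

theorem substPS_eq_subst {R : Type*} [CommRing R] {a : MvPowerSeries (Fin 2) R}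
    (ha : MvPowerSeries.constantCoeff a = 0) (f : PowerSeries R) :
    substPS a f = f.subst a := by
  ext d
  rw [PowerSeries.coeff_subst (HasSubst.of_constantCoeff_zero ha),
    finsum_eq_sum_of_support_subset (s := Finset.range (d 0 + d 1 + 1))]
  · rfl
  · intro n hn
    rw [Function.mem_support] at hn
    rw [Finset.coe_range, Set.mem_Iio]
    by_contra! h
    refine hn ?_
    rw [MvPowerSeries.coeff_pow_eq_zero_of_degree_lt ha, smul_zero]
    rw [Finsupp.degree_eq_sum, Fin.sum_univ_two]
    omega

theorem catalanGF_eq : catalanGF = 1 + PowerSeries.X * catalanGF ^ 2 := by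
  ext (_ | n)
  · simp [catalanGF]
  · rw [map_add, PowerSeries.coeff_succ_X_mul, sq, PowerSeries.coeff_mul]
    simp [catalanGF, catalan_succ']

noncomputable def runFactor {R : Type*} [CommRing R] : MvPowerSeries (Fin 2) R :=
  (1 - MvPowerSeries.X 0) * MvPowerSeries.invOfUnit (1 - MvPowerSeries.X 0 * MvPowerSeries.X 1) 1

theorem coeff_runFactor {R : Type*} [CommRing R] (d : Fin 2 →₀ ℕ) :
    MvPowerSeries.coeff d (runFactor : MvPowerSeries (Fin 2) R) =
      (if d 0 = d 1 then 1 else 0) - (if d 0 = d 1 + 1 then 1 else 0) := by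
  set G : MvPowerSeries (Fin 2) R :=
    fun d => (if d 0 = d 1 then 1 else 0) - (if d 0 = d 1 + 1 then 1 else 0)
  have hG : ∀ e, MvPowerSeries.coeff e G =
      (if e 0 = e 1 then 1 else 0) - (if e 0 = e 1 + 1 then 1 else 0) := fun _ => rfl
  have hmul : (1 - MvPowerSeries.X 0 * MvPowerSeries.X 1) * G = 1 - MvPowerSeries.X 0 := by
    ext d
    rw [sub_mul, one_mul, map_sub, map_sub, mul_assoc, MvPowerSeries.coeff_one,
      MvPowerSeries.coeff_X]
    rcases Nat.eq_zero_or_pos (d 0) with h0 | h0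
    · rw [MvPowerSeries.coeff_X_mul_of_eq_zero _ h0]
      simp [hG, Finsupp.ext_iff, Fin.forall_fin_two, h0, eq_comm]
    rw [MvPowerSeries.coeff_X_mul_of_pos _ h0]
    rcases Nat.eq_zero_or_pos (d 1) with h1 | h1
    · rw [MvPowerSeries.coeff_X_mul_of_eq_zero _ (by simpa using h1)]
      simp [hG, Finsupp.ext_iff, Fin.forall_fin_two, h1]
    · rw [MvPowerSeries.coeff_X_mul_of_pos _ (by simpa using h1)]
      simp only [hG, Finsupp.ext_iff, Fin.forall_fin_two, Finsupp.coe_tsub, Pi.sub_apply,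
        Finsupp.single_eq_same, Finsupp.single_eq_of_ne zero_ne_one,
        Finsupp.single_eq_of_ne one_ne_zero, Finsupp.coe_zero, Pi.zero_apply, tsub_zero]
      split_ifs <;> first | omega | ring
  have hinv : (1 - MvPowerSeries.X 0 * MvPowerSeries.X 1 : MvPowerSeries (Fin 2) R) *
      MvPowerSeries.invOfUnit (1 - MvPowerSeries.X 0 * MvPowerSeries.X 1) 1 = 1 :=
    MvPowerSeries.mul_invOfUnit _ _ (by simp)
  rw [← hG, runFactor, ← hmul, mul_right_comm, hinv, one_mul]

theorem runTransform_eq_runFactor_mul_subst {R : Type*} [CommRing R] (f : PowerSeries R) :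
    runTransform f = runFactor * f.subst (MvPowerSeries.X 0 * runFactor) := by
  rw [runTransform, runFactor, mul_assoc (MvPowerSeries.X 0), substPS_eq_subst (by simp)]

theorem runTransform_eq_runFactor_add_X_mul_sq {R : Type*} [CommRing R] {f : PowerSeries R}
    (hf : f = 1 + PowerSeries.X * f ^ 2) :
    runTransform f = runFactor + MvPowerSeries.X 0 * runTransform f ^ 2 := by
  have hA : HasSubst (MvPowerSeries.X 0 * runFactor : MvPowerSeries (Fin 2) R) :=
    HasSubst.of_constantCoeff_zero (by simp)
  have hS := congr_arg (PowerSeries.substAlgHom (R := R) hA) hf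
  rw [map_add, map_one, map_mul, map_pow, PowerSeries.substAlgHom_X,
    PowerSeries.coe_substAlgHom] at hS
  rw [runTransform_eq_runFactor_mul_subst]
  nth_rw 1 [hS]
  ring

namespace RunEquation

variable {R : Type*} [CommRing R] {F : MvPowerSeries (Fin 2) R}

theorem coeff_of_eq_zero (hF : F = runFactor + MvPowerSeries.X 0 * F ^ 2)
    {d : Fin 2 →₀ ℕ} (hd : d 0 = 0) :
    MvPowerSeries.coeff d F = MvPowerSeries.coeff d runFactor := by
  rw [hF, map_add, MvPowerSeries.coeff_X_mul_of_eq_zero _ hd, add_zero]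

theorem coeff_of_pos (hF : F = runFactor + MvPowerSeries.X 0 * F ^ 2)
    {d : Fin 2 →₀ ℕ} (hd : 0 < d 0) :
    MvPowerSeries.coeff d F = MvPowerSeries.coeff d runFactor +
      ∑ p ∈ antidiagonal (d - Finsupp.single 0 1),
        MvPowerSeries.coeff p.1 F * MvPowerSeries.coeff p.2 F := by
  conv_lhs => rw [hF]
  rw [map_add, MvPowerSeries.coeff_X_mul_of_pos _ hd, sq, MvPowerSeries.coeff_mul]

theorem coeff_eq_zero_of_lt (hF : F = runFactor + MvPowerSeries.X 0 * F ^ 2)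
    (d : Fin 2 →₀ ℕ) (hd : d 0 < d 1) : MvPowerSeries.coeff d F = 0 := by
  induction d using WellFoundedLT.induction with
  | _ d ih =>
    rcases Nat.eq_zero_or_pos (d 0) with h0 | h0
    · rw [coeff_of_eq_zero hF h0, coeff_runFactor, if_neg (by omega), if_neg (by omega),
        sub_zero]
    · rw [coeff_of_pos hF h0, coeff_runFactor, if_neg (by omega), if_neg (by omega), sub_zero,
        zero_add]
      refine Finsupp.sum_antidiagonal_mul_eq_zero_of_lt _ (i := 0) (j := 1) (by simp; omega)
        fun e he => ih e (he.trans_lt (Finsupp.tsub_single_lt h0))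

theorem coeff_eq_one_of_eq (hF : F = runFactor + MvPowerSeries.X 0 * F ^ 2)
    {d : Fin 2 →₀ ℕ} (hd : d 0 = d 1) : MvPowerSeries.coeff d F = 1 := by
  rcases Nat.eq_zero_or_pos (d 0) with h0 | h0
  · rw [coeff_of_eq_zero hF h0, coeff_runFactor, if_pos hd, if_neg (by omega), sub_zero]
  · rw [coeff_of_pos hF h0, coeff_runFactor, if_pos hd, if_neg (by omega), sub_zero,
      Finsupp.sum_antidiagonal_mul_eq_zero_of_lt _ (i := 0) (j := 1) (by simp; omega)
        fun e _ => coeff_eq_zero_of_lt hF e, add_zero]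

theorem coeff_nonneg [LinearOrder R] [IsStrictOrderedRing R]
    (hF : F = runFactor + MvPowerSeries.X 0 * F ^ 2) (d : Fin 2 →₀ ℕ) :
    0 ≤ MvPowerSeries.coeff d F := by
  induction d using WellFoundedLT.induction with
  | _ d ih =>
    rcases Nat.eq_zero_or_pos (d 0) with h0 | h0
    · rw [coeff_of_eq_zero hF h0, coeff_runFactor, if_neg (show ¬d 0 = d 1 + 1 by omega),
        sub_zero]
      split_ifs <;> simp
    have hterm : ∀ p ∈ antidiagonal (d - Finsupp.single 0 1),
        0 ≤ MvPowerSeries.coeff p.1 F * MvPowerSeries.coeff p.2 F := fun p hp => by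
      rw [HasAntidiagonal.mem_antidiagonal] at hp
      have hlt := Finsupp.tsub_single_lt h0
      exact mul_nonneg (ih _ ((hp ▸ le_self_add).trans_lt hlt))
        (ih _ ((hp ▸ le_add_self).trans_lt hlt))
    rw [coeff_of_pos hF h0, coeff_runFactor]
    by_cases hsub : d 0 = d 1 + 1
    · have hmem : (0, d - Finsupp.single 0 1) ∈ antidiagonal (d - Finsupp.single 0 1) := by
        simp
      have hone := Finset.single_le_sum hterm hmem
      rw [coeff_eq_one_of_eq hF rfl, coeff_eq_one_of_eq hF (by simp; omega), one_mul] at hone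
      rw [if_neg (by omega), if_pos hsub]
      linarith
    · rw [if_neg hsub, sub_zero]
      exact add_nonneg (by split_ifs <;> simp) (Finset.sum_nonneg hterm)

end RunEquation

/-- all coefficients `u_{n,k}` of `C(x,y) = Φ(C(x))` are nonnegative. -/
theorem runTransform_catalan_nonneg (n k : ℕ) :
    0 ≤ MvPowerSeries.coeff (Finsupp.single 0 n + Finsupp.single 1 k)
      (runTransform catalanGF) :=
  RunEquation.coeff_nonneg (runTransform_eq_runFactor_add_X_mul_sq catalanGF_eq) _
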